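/- For every δ ∈ (0,1), every L ∈ ℕ, every environment ω ∈ Γ(L,δ) satisfying P_ω(τ(b_+) < τ(b_−)) ≥ 1/2, and every n ∈ ℕ with n ≥ e^{3δL}, one has P_ω(τ(b_+) ≤ 2n/3 and τ(b_+) < τ(b_−)) ≥ 1/2 − 6·L⁴·e^{−δL}, where b_± := T_b^±(L). -/

import Mathlib

open MeasureTheory ProbabilityTheory Filter

noncomputable section

/-- One-step transition probabilities of the one-dimensional RWRE in environment `ω`. -/
def step (ω : ℤ → ℝ) (x y : ℤ) : ℝ :=
  if y = x + 1 then ω x else if y = x - 1 then 1 - ω x else 0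

/-- `IsMarkovChain K z P` : `P` is the law of the Markov chain on `S` with one-step
transition probabilities `K` started (deterministically) at `z`, characterized through its
finite-dimensional (cylinder) probabilities. -/
def IsMarkovChain {S : Type*} [MeasurableSpace S] [DecidableEq S] (K : S → S → ℝ) (z : S)
    (P : Measure (ℕ → S)) : Prop :=
  IsProbabilityMeasure P ∧
    ∀ (n : ℕ) (path : ℕ → S),
      (P {X | ∀ i ≤ n, X i = path i}).toReal
        = (if path 0 = z then 1 else 0) * ∏ i ∈ Finset.range n, K (path i) (path (i + 1))

/-- `IsRWRE ω z P` : `P` is the quenched law `P_ω^z` of the RWRE in environment `ω`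
started at `z`. -/
def IsRWRE (ω : ℤ → ℝ) (z : ℤ) (P : Measure (ℕ → ℤ)) : Prop :=
  IsMarkovChain (step ω) z P

/-- `logρ ω i = log ρ_i`. -/
def logρ (ω : ℤ → ℝ) (i : ℤ) : ℝ := Real.log ((1 - ω i) / ω i)

/-- `IsRandomEnv ℙ ε env` : `env` is an i.i.d. random environment with values in `[ε, 1-ε]`,
with `𝔼[log ρ_0] = 0` and `Var(log ρ_0) > 0`. -/
structure IsRandomEnv {Ω : Type*} [MeasurableSpace Ω] (Pr : Measure Ω) (ε : ℝ)
    (env : Ω → ℤ → ℝ) : Prop where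
  isProb : IsProbabilityMeasure Pr
  meas : ∀ x : ℤ, Measurable fun θ => env θ x
  elliptic : ∀ᵐ θ ∂Pr, ∀ x : ℤ, env θ x ∈ Set.Icc ε (1 - ε)
  indep : iIndepFun (fun x θ => env θ x) Pr
  ident : ∀ x : ℤ, IdentDistrib (fun θ => env θ x) (fun θ => env θ 0) Pr Pr
  mean_zero : ∫ θ, logρ (env θ) 0 ∂Pr = 0
  var_pos : 0 < variance (fun θ => logρ (env θ) 0) Pr

/-- The potential `V` associated with the environment `ω`. -/
def pot (ω : ℤ → ℝ) (x : ℤ) : ℝ :=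
  if 0 ≤ x then ∑ i ∈ Finset.Icc 1 x, logρ ω i
  else -∑ i ∈ Finset.Icc (x + 1) 0, logρ ω i

/-- `min_{a ≤ y ≤ b} V(y)`. -/
def minV (ω : ℤ → ℝ) (a b : ℤ) : ℝ := sInf (pot ω '' Set.Icc a b)

/-- `max_{a ≤ y ≤ b} V(y)`. -/
def maxV (ω : ℤ → ℝ) (a b : ℤ) : ℝ := sSup (pot ω '' Set.Icc a b)

/-- `T^+(L)`. -/
def Tplus (ω : ℤ → ℝ) (L : ℝ) : ℤ :=
  sInf {z : ℤ | 0 ≤ z ∧ L ≤ pot ω z - minV ω 0 z}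

/-- `T^-(L)`. -/
def Tminus (ω : ℤ → ℝ) (L : ℝ) : ℤ :=
  sSup {z : ℤ | z ≤ 0 ∧ L ≤ pot ω z - minV ω z 0}

/-- `R_1^+(L)`. -/
def R1plus (ω : ℤ → ℝ) (L : ℝ) : ℝ := -minV ω 0 (Tplus ω L)

/-- `R_1^-(L)`. -/
def R1minus (ω : ℤ → ℝ) (L : ℝ) : ℝ := -minV ω (Tminus ω L) 0

/-- `T_b^+(L)`. -/
def Tbplus (ω : ℤ → ℝ) (L : ℝ) : ℤ :=
  sInf {z : ℤ | 0 ≤ z ∧ pot ω z = -R1plus ω L}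

/-- `T_b^-(L)`. -/
def Tbminus (ω : ℤ → ℝ) (L : ℝ) : ℤ :=
  sSup {z : ℤ | z ≤ 0 ∧ pot ω z = -R1minus ω L}

/-- `R_2^+(L)`. -/
def R2plus (ω : ℤ → ℝ) (L : ℝ) : ℝ := maxV ω 0 (Tbplus ω L)

/-- `R_2^-(L)`. -/
def R2minus (ω : ℤ → ℝ) (L : ℝ) : ℝ := maxV ω (Tbminus ω L) 0

/-- The set `Γ(L,δ)` of (elliptic) environments. -/
def Gamma (ε : ℝ) (L : ℕ) (δ : ℝ) : Set (ℤ → ℝ) :=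
  {ω | (∀ x : ℤ, ω x ∈ Set.Icc ε (1 - ε)) ∧
    R1plus ω L ≤ δ * L ∧ R1minus ω L ≤ δ * L ∧
    R2plus ω L ≤ δ * L ∧ R2minus ω L ≤ δ * L ∧
    Tplus ω L ≤ (L : ℤ) ^ 2 ∧ |Tminus ω L| ≤ (L : ℤ) ^ 2}

/-- The hitting time `τ(x)` of a site `x : ℤ` by a path, with value `⊤ = ∞` if the path
never visits `x`. -/
def hitTime (x : ℤ) (X : ℕ → ℤ) : ℕ∞ := sInf ((fun n : ℕ => (n : ℕ∞)) '' {n : ℕ | X n = x})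

/-- One-step transition probabilities of the RWRE reflected at `a` (from above) and at
`b` (from below). -/
def rstep (ω : ℤ → ℝ) (a b : ℤ) (x y : ℤ) : ℝ :=
  if x = a then (if y = a + 1 then 1 else 0)
  else if x = b then (if y = b - 1 then 1 else 0)
  else step ω x y

/-- Convergence in distribution of a sequence of laws on `ℝ`. -/
def TendstoInDistribution (μs : ℕ → Measure ℝ) (μ : Measure ℝ) : Prop :=
  ∀ f : BoundedContinuousFunction ℝ ℝ,
    Tendsto (fun n => ∫ x, f x ∂(μs n)) atTop (nhds (∫ x, f x ∂μ))

/-- `μ` is a (nondegenerate) `β`-stable law on `ℝ`. -/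
def IsStableLaw (β : ℝ) (μ : Measure ℝ) : Prop :=
  IsProbabilityMeasure μ ∧ (∀ x : ℝ, μ ≠ Measure.dirac x) ∧
    ∀ a b : ℝ, 0 < a → 0 < b → ∃ c : ℝ,
      (μ.map (fun x => a * x)).conv (μ.map (fun x => b * x))
        = μ.map (fun x => (a ^ β + b ^ β) ^ (1 / β) * x + c)

/-- `n`-fold additive convolution power of a measure on `ℤ` (law of `Z_1 + ⋯ + Z_n`). -/
def convPow (ν : Measure ℤ) : ℕ → Measure ℤ
  | 0 => Measure.dirac 0
  | n + 1 => (convPow ν n).conv ν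

/-- Transition probabilities of the model (II) on `ℤ²`. -/
def kernelII (δ : ℝ) (ω : ℤ → ℝ) (ν : Measure ℤ) (p q : ℤ × ℤ) : ℝ :=
  if q.1 = p.1 + 1 ∧ q.2 = p.2 then δ * ω p.1
  else if q.1 = p.1 - 1 ∧ q.2 = p.2 then δ * (1 - ω p.1)
  else if q.1 = p.1 then (1 - δ) * (ν {q.2 - p.2}).toReal
  else 0

/-- Transition probabilities of the model (III) (odd-even orientations) on `ℤ²`:
the vertical displacement from `(x,y)` to `(x,y+z)` has probability `(1-δ)·ν({(-1)^x z})`. -/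
def kernelIII (δ : ℝ) (ω : ℤ → ℝ) (ν : Measure ℤ) (p q : ℤ × ℤ) : ℝ :=
  if q.1 = p.1 + 1 ∧ q.2 = p.2 then δ * ω p.1
  else if q.1 = p.1 - 1 ∧ q.2 = p.2 then δ * (1 - ω p.1)
  else if q.1 = p.1 then
    (1 - δ) * (ν {if Even p.1 then q.2 - p.2 else p.2 - q.2}).toReal
  else 0

/-- A function `l` is slowly varying (at `+∞`). -/
def SlowlyVarying (l : ℝ → ℝ) : Prop :=
  (∀ᶠ x in atTop, 0 < l x) ∧
    ∀ c : ℝ, 0 < c → Tendsto (fun x => l (c * x) / l x) atTop (nhds 1)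

/-!
On `Γ(L, δ)` one has `b₋ ≤ 0 ≤ b₊`, `b₊ - b₋ ≤ 2L²`, and `|V| ≤ δL` on `[b₋, b₊]`. The expected
hitting time `h` of `b₋` for the walk held at `b₊` is explicit in `V`, which gives
`h(0) ≤ 4L⁴e^{2δL}`, and `h` is a supersolution of the Poisson equation `h = 1 + Kh` on
`(b₋, b₊)`. Hence `h(0)` dominates `∑_{k ≤ m} P_ω(X stays in (b₋, b₊) up to time k)`; these
probabilities decrease in `k`, so with `m = ⌊2n/3⌋` and `n ≥ e^{3δL}` the walk stays in
`(b₋, b₊)` up to time `m` with probability at most `4L⁴e^{2δL}/(m + 1) ≤ 6L⁴e^{-δL}`. Off that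
event, a walk that reaches `b₊` before `b₋` does so by time `2n/3`.
-/

section Potential

open Real

variable (ω : ℤ → ℝ)

lemma pot_succ (x : ℤ) : pot ω (x + 1) = pot ω x + logρ ω (x + 1) := by
  unfold pot
  rcases lt_trichotomy x (-1) with hx | rfl | hx
  · rw [if_neg (by omega), if_neg (by omega), show Finset.Icc (x + 1) 0
      = insert (x + 1) (Finset.Icc (x + 1 + 1) 0) by ext; simp; omega,
      Finset.sum_insert (by simp)]
    ring
  · simp
  · rw [if_pos (by omega), if_pos (by omega), show Finset.Icc 1 (x + 1)
      = insert (x + 1) (Finset.Icc 1 x) by ext; simp; omega, Finset.sum_insert (by simp)]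
    ring

lemma pot_sub_pred (x : ℤ) : pot ω x - pot ω (x - 1) = logρ ω x := by
  simpa using congrArg (· - pot ω (x - 1)) (pot_succ ω (x - 1))

variable {ω}

lemma exp_logρ {x : ℤ} (hx : ω x ∈ Set.Ioo 0 1) : exp (logρ ω x) = (1 - ω x) / ω x :=
  exp_log (div_pos (by linarith [hx.2]) hx.1)

lemma minV_le_pot {a b z : ℤ} (hz : z ∈ Set.Icc a b) : minV ω a b ≤ pot ω z :=
  csInf_le ((Set.finite_Icc a b).image _).bddBelow (Set.mem_image_of_mem _ hz)

lemma pot_le_maxV {a b z : ℤ} (hz : z ∈ Set.Icc a b) : pot ω z ≤ maxV ω a b :=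
  le_csSup ((Set.finite_Icc a b).image _).bddAbove (Set.mem_image_of_mem _ hz)

lemma exists_pot_eq_minV {a b : ℤ} (h : a ≤ b) : ∃ y ∈ Set.Icc a b, pot ω y = minV ω a b :=
  ((Set.nonempty_Icc.2 h).image _).csInf_mem ((Set.finite_Icc a b).image _)

end Potential

section ValleyBounds

variable (ω : ℤ → ℝ) (L : ℝ)

lemma Tplus_nonneg : 0 ≤ Tplus ω L := by
  rcases Set.eq_empty_or_nonempty {z : ℤ | 0 ≤ z ∧ L ≤ pot ω z - minV ω 0 z} with h | h
  · simp [Tplus, h]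
  · exact (Int.csInf_mem h ⟨0, fun _ hz => hz.1⟩).1

lemma Tminus_nonpos : Tminus ω L ≤ 0 := by
  rcases Set.eq_empty_or_nonempty {z : ℤ | z ≤ 0 ∧ L ≤ pot ω z - minV ω z 0} with h | h
  · simp [Tminus, h]
  · exact (Int.csSup_mem h ⟨0, fun _ hz => hz.1⟩).1

lemma Tbplus_mem_Icc : Tbplus ω L ∈ Set.Icc 0 (Tplus ω L) := by
  obtain ⟨y, hy, hpot⟩ := exists_pot_eq_minV (ω := ω) (Tplus_nonneg ω L)
  have hyS : y ∈ {z : ℤ | 0 ≤ z ∧ pot ω z = -R1plus ω L} := ⟨hy.1, by rw [hpot, R1plus, neg_neg]⟩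
  exact ⟨(Int.csInf_mem ⟨y, hyS⟩ ⟨0, fun _ hz => hz.1⟩).1,
    (csInf_le ⟨0, fun _ hz => hz.1⟩ hyS).trans hy.2⟩

lemma Tbminus_mem_Icc : Tbminus ω L ∈ Set.Icc (Tminus ω L) 0 := by
  obtain ⟨y, hy, hpot⟩ := exists_pot_eq_minV (ω := ω) (Tminus_nonpos ω L)
  have hyS : y ∈ {z : ℤ | z ≤ 0 ∧ pot ω z = -R1minus ω L} := ⟨hy.2, by rw [hpot, R1minus, neg_neg]⟩
  exact ⟨hy.1.trans (le_csSup ⟨0, fun _ hz => hz.1⟩ hyS),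
    (Int.csSup_mem ⟨y, hyS⟩ ⟨0, fun _ hz => hz.1⟩).1⟩

variable {ω L}

lemma pot_mem_Icc_of_mem_Icc_Tbplus {z : ℤ} (hz : z ∈ Set.Icc 0 (Tbplus ω L)) :
    pot ω z ∈ Set.Icc (-R1plus ω L) (R2plus ω L) := by
  refine ⟨?_, pot_le_maxV hz⟩
  rw [R1plus, neg_neg]
  exact minV_le_pot ⟨hz.1, hz.2.trans (Tbplus_mem_Icc ω L).2⟩

lemma pot_mem_Icc_of_mem_Icc_Tbminus {z : ℤ} (hz : z ∈ Set.Icc (Tbminus ω L) 0) :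
    pot ω z ∈ Set.Icc (-R1minus ω L) (R2minus ω L) := by
  refine ⟨?_, pot_le_maxV hz⟩
  rw [R1minus, neg_neg]
  exact minV_le_pot ⟨(Tbminus_mem_Icc ω L).1.trans hz.1, hz.2⟩

end ValleyBounds

section Gamma

variable {ε δ : ℝ} {L : ℕ} {ω : ℤ → ℝ}

lemma Tbplus_le_sq (hω : ω ∈ Gamma ε L δ) : Tbplus ω L ≤ (L : ℤ) ^ 2 :=
  (Tbplus_mem_Icc ω L).2.trans hω.2.2.2.2.2.1

lemma neg_sq_le_Tbminus (hω : ω ∈ Gamma ε L δ) : -(L : ℤ) ^ 2 ≤ Tbminus ω L :=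
  (neg_le_of_abs_le hω.2.2.2.2.2.2).trans (Tbminus_mem_Icc ω L).1

lemma abs_pot_le_of_mem_Gamma (hω : ω ∈ Gamma ε L δ) {z : ℤ}
    (hz : z ∈ Set.Icc (Tbminus ω L) (Tbplus ω L)) : |pot ω z| ≤ δ * L := by
  obtain ⟨-, h1p, h1m, h2p, h2m, -⟩ := hω
  rcases le_total z 0 with h | h
  · have := pot_mem_Icc_of_mem_Icc_Tbminus ⟨hz.1, h⟩
    exact abs_le.2 ⟨by linarith [this.1], this.2.trans h2m⟩
  · have := pot_mem_Icc_of_mem_Icc_Tbplus ⟨h, hz.2⟩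
    exact abs_le.2 ⟨by linarith [this.1], this.2.trans h2p⟩

end Gamma

section ExitTime

open Real

variable (ω : ℤ → ℝ) (a b : ℤ)

def exitIncr (y : ℤ) : ℝ := ∑ j ∈ Finset.Icc (y + 1) b, exp (pot ω y - pot ω j) / ω j

/-- `exitTime ω a b x` is the expected hitting time of `a` from `x ∈ [a, b]` for the walk that
stays put instead of stepping from `b` to `b + 1`. -/
def exitTime (x : ℤ) : ℝ := ∑ y ∈ Finset.Ico a x, exitIncr ω b y

variable {ω a b}

lemma exitIncr_nonneg (hω : ∀ x, 0 ≤ ω x) (y : ℤ) : 0 ≤ exitIncr ω b y :=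
  Finset.sum_nonneg fun j _ => div_nonneg (exp_nonneg _) (hω j)

lemma exitTime_nonneg (hω : ∀ x, 0 ≤ ω x) (x : ℤ) : 0 ≤ exitTime ω a b x :=
  Finset.sum_nonneg fun y _ => exitIncr_nonneg hω y

lemma exitTime_succ {x : ℤ} (h : a ≤ x) :
    exitTime ω a b (x + 1) = exitTime ω a b x + exitIncr ω b x := by
  rw [exitTime, exitTime, show Finset.Ico a (x + 1) = insert x (Finset.Ico a x) by
    ext; simp; omega, Finset.sum_insert (by simp), add_comm]

lemma exp_pot_pred_sub {x : ℤ} (hx : ω x ∈ Set.Ioo 0 1) :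
    exp (pot ω (x - 1) - pot ω x) = ω x / (1 - ω x) := by
  rw [← neg_sub, pot_sub_pred, exp_neg, exp_logρ hx, inv_div]

lemma one_sub_mul_exitIncr_pred {x : ℤ} (hx : ω x ∈ Set.Ioo 0 1) (h : x ≤ b) :
    (1 - ω x) * exitIncr ω b (x - 1) = 1 + ω x * exitIncr ω b x := by
  have hshift : ∀ j, exp (pot ω (x - 1) - pot ω j) / ω j
      = ω x / (1 - ω x) * (exp (pot ω x - pot ω j) / ω j) := fun j => by
    rw [← exp_pot_pred_sub hx, mul_div_assoc', ← exp_add]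
    ring_nf
  rw [exitIncr, exitIncr, sub_add_cancel, show Finset.Icc x b = insert x (Finset.Icc (x + 1) b) by
    ext; simp; omega, Finset.sum_insert (by simp), Finset.sum_congr rfl fun j _ => hshift j,
    ← Finset.mul_sum, exp_pot_pred_sub hx]
  have : 1 - ω x ≠ 0 := by linarith [hx.2]
  have := hx.1.ne'
  field_simp

lemma exitTime_poisson {x : ℤ} (hx : ω x ∈ Set.Ioo 0 1) (ha : a < x) (hb : x ≤ b) :
    1 + ω x * exitTime ω a b (x + 1) + (1 - ω x) * exitTime ω a b (x - 1) = exitTime ω a b x := by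
  have hpred := exitTime_succ (ω := ω) (b := b) (show a ≤ x - 1 by omega)
  rw [sub_add_cancel] at hpred
  rw [exitTime_succ ha.le, hpred]
  linear_combination -(one_sub_mul_exitIncr_pred hx hb)

lemma exp_pot_sub_div {y j : ℤ} (hj : ω j ∈ Set.Ioo 0 1) :
    exp (pot ω y - pot ω j) / ω j = exp (pot ω y - pot ω j) + exp (pot ω y - pot ω (j - 1)) := by
  rw [show pot ω y - pot ω (j - 1) = pot ω y - pot ω j + logρ ω j by
    rw [← pot_sub_pred]; ring, exp_add, exp_logρ hj]
  have := hj.1.ne'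
  field_simp
  ring

lemma exitIncr_le {c : ℝ} (hω : ∀ x, ω x ∈ Set.Ioo 0 1)
    (hV : ∀ z ∈ Set.Icc a b, |pot ω z| ≤ c) {y : ℤ} (hy : y ∈ Set.Icc a b) :
    exitIncr ω b y ≤ (b - y) * (2 * exp (2 * c)) := by
  obtain ⟨hay, hyb⟩ := hy
  have hterm : ∀ j ∈ Finset.Icc (y + 1) b, exp (pot ω y - pot ω j) / ω j ≤ 2 * exp (2 * c) := by
    intro j hj
    rw [Finset.mem_Icc] at hj
    have hVy := abs_le.1 (hV y ⟨hay, hyb⟩)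
    have hVj := abs_le.1 (hV j ⟨by omega, hj.2⟩)
    have hVj' := abs_le.1 (hV (j - 1) ⟨by omega, by omega⟩)
    rw [exp_pot_sub_div (hω j), two_mul (exp _)]
    gcongr <;> linarith
  calc exitIncr ω b y ≤ ∑ _j ∈ Finset.Icc (y + 1) b, 2 * exp (2 * c) := Finset.sum_le_sum hterm
    _ = (b - y) * (2 * exp (2 * c)) := by
      rw [Finset.sum_const, Int.card_Icc, nsmul_eq_mul, add_sub_add_right_eq_sub,
        show (((b - y).toNat : ℕ) : ℝ) = ((b - y : ℤ) : ℝ) by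
          exact_mod_cast Int.toNat_of_nonneg (by omega)]
      push_cast; ring

lemma exitTime_le {x : ℤ} {c : ℝ} (hω : ∀ x, ω x ∈ Set.Ioo 0 1)
    (hV : ∀ z ∈ Set.Icc a b, |pot ω z| ≤ c) (hx : x ∈ Set.Icc a b) :
    exitTime ω a b x ≤ (x - a) * ((b - a) * (2 * exp (2 * c))) := by
  obtain ⟨hax, hxb⟩ := hx
  calc exitTime ω a b x ≤ ∑ _y ∈ Finset.Ico a x, (b - a) * (2 * exp (2 * c)) := by
        refine Finset.sum_le_sum fun y hy => ?_
        rw [Finset.mem_Ico] at hy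
        refine (exitIncr_le hω hV ⟨hy.1, by omega⟩).trans ?_
        gcongr
        exact_mod_cast hy.1
    _ = (x - a) * ((b - a) * (2 * exp (2 * c))) := by
      rw [Finset.sum_const, Int.card_Ico, nsmul_eq_mul,
        show (((x - a).toNat : ℕ) : ℝ) = ((x - a : ℤ) : ℝ) by
          exact_mod_cast Int.toNat_of_nonneg (by omega : 0 ≤ x - a)]
      push_cast; ring

end ExitTime

section KilledChain

variable {S : Type*} (K : S → S → ℝ)

def pathWeight {m : ℕ} (v : Fin (m + 1) → S) : ℝ := ∏ i : Fin m, K (v i.castSucc) (v i.succ)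

variable {K} in
lemma pathWeight_cons {m : ℕ} (x : S) (w : Fin (m + 1) → S) :
    pathWeight K (Fin.cons x w : Fin (m + 2) → S) = K x (w 0) * pathWeight K w := by
  simp only [pathWeight, Fin.prod_univ_succ, Fin.cons_succ, Fin.castSucc_zero, Fin.cons_zero,
    ← Fin.succ_castSucc]

lemma sum_piFinset_const_succ [DecidableEq S] (s : Finset S) {m : ℕ}
    (F : (Fin (m + 1) → S) → ℝ) :
    ∑ v ∈ Fintype.piFinset (fun _ => s), F v
      = ∑ x ∈ s, ∑ w ∈ Fintype.piFinset (fun _ : Fin m => s), F (Fin.cons x w) := by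
  have h := Finset.filter_piFinset_eq_map_consEquiv (fun _ : Fin (m + 1) => s) (fun _ => True)
  simp only [Finset.filter_true] at h
  rw [h, Finset.sum_map, Finset.sum_product]
  rfl

variable [DecidableEq S] (s : Finset S)

def survival : ℕ → S → ℝ
  | 0, x => if x ∈ s then 1 else 0
  | m + 1, x => if x ∈ s then ∑ y ∈ s, K x y * survival m y else 0

variable {K s}

lemma survival_eq_sum_pathWeight (m : ℕ) (x : S) :
    survival K s m x = ∑ v ∈ Fintype.piFinset (fun _ : Fin (m + 1) => s),
      if v 0 = x then pathWeight K v else 0 := by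
  rw [sum_piFinset_const_succ]
  simp only [Fin.cons_zero, Finset.sum_ite_irrel, Finset.sum_const_zero, Finset.sum_ite_eq']
  induction m generalizing x with
  | zero =>
    simp [survival, pathWeight]
  | succ m ih =>
    rw [survival, sum_piFinset_const_succ]
    congr 1
    refine Finset.sum_congr rfl fun y hy => ?_
    simp only [ih, if_pos hy, Finset.mul_sum, pathWeight_cons, Fin.cons_zero]

lemma sum_range_survival_le (hK : ∀ x ∈ s, ∀ y ∈ s, 0 ≤ K x y) {h : S → ℝ}
    (h0 : ∀ x, 0 ≤ h x) (hsup : ∀ x ∈ s, 1 + ∑ y ∈ s, K x y * h y ≤ h x) (m : ℕ) (x : S) :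
    ∑ k ∈ Finset.range m, survival K s k x ≤ h x := by
  induction m generalizing x with
  | zero => simpa using h0 x
  | succ m ih =>
    rw [Finset.sum_range_succ']
    by_cases hx : x ∈ s
    · calc ∑ k ∈ Finset.range m, survival K s (k + 1) x + survival K s 0 x
          = 1 + ∑ y ∈ s, K x y * ∑ k ∈ Finset.range m, survival K s k y := by
            simp only [survival, if_pos hx, Finset.mul_sum]
            rw [Finset.sum_comm, add_comm]
        _ ≤ 1 + ∑ y ∈ s, K x y * h y := by
            gcongr with y hy
            · exact hK x hx y hy
            · exact ih y
        _ ≤ h x := hsup x hx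
    · simpa [survival, hx] using h0 x

end KilledChain

section MarkovChain

variable {S : Type*}

def extendPath {n : ℕ} (v : Fin (n + 1) → S) : ℕ → S := fun j => v ⟨min j n, by omega⟩

lemma extendPath_apply_of_le (X : ℕ → S) {n j : ℕ} (hj : j ≤ n) :
    extendPath (fun i : Fin (n + 1) => X i) j = X j := by
  simp [extendPath, min_eq_left hj]

lemma extendPath_coe {n : ℕ} (v : Fin (n + 1) → S) (i : Fin (n + 1)) : extendPath v i = v i := by
  simp [extendPath, min_eq_left (Nat.lt_succ_iff.1 i.is_lt)]

variable [MeasurableSpace S] [DecidableEq S] {K : S → S → ℝ} {z : S} {P : Measure (ℕ → S)}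

lemma IsMarkovChain.measureReal_cylinder (hP : IsMarkovChain K z P) {n : ℕ}
    (v : Fin (n + 1) → S) :
    P.real {X | ∀ i ≤ n, X i = extendPath v i} = if v 0 = z then pathWeight K v else 0 := by
  rw [measureReal_def, hP.2, ← Fin.prod_univ_eq_prod_range, ite_mul, one_mul, zero_mul]
  simp only [pathWeight, ← extendPath_coe v, Fin.val_castSucc, Fin.val_succ, Fin.val_zero]

lemma IsMarkovChain.measure_eq_zero [Countable S] (hP : IsMarkovChain K z P) {A : Set (ℕ → S)}
    (n : ℕ) (hA : ∀ X ∈ A, X 0 = z → pathWeight K (fun i : Fin (n + 1) => X i) = 0) :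
    P A = 0 := by
  have := hP.1
  refine measure_mono_null (t := ⋃ (v : Fin (n + 1) → S)
    (_ : (if v 0 = z then pathWeight K v else 0) = 0), {X | ∀ i ≤ n, X i = extendPath v i}) ?_ ?_
  · intro X hX
    refine Set.mem_iUnion₂.2 ⟨_, ?_, fun i hi => (extendPath_apply_of_le X hi).symm⟩
    split_ifs with h
    · exact hA X hX h
    · rfl
  · refine measure_iUnion_null fun v => measure_iUnion_null fun hv => ?_
    rw [← measureReal_eq_zero_iff, hP.measureReal_cylinder, hv]

lemma IsMarkovChain.ae_start_and_step_ne_zero [Countable S] (hP : IsMarkovChain K z P) :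
    ∀ᵐ X ∂P, X 0 = z ∧ ∀ i, K (X i) (X (i + 1)) ≠ 0 := by
  have hstart : P {X | X 0 ≠ z} = 0 := hP.measure_eq_zero 0 fun X hX h => absurd h hX
  have hstep (i : ℕ) : P {X | K (X i) (X (i + 1)) = 0} = 0 :=
    hP.measure_eq_zero (i + 1) fun X hX _ =>
      Finset.prod_eq_zero (Finset.mem_univ (Fin.last i)) (by simpa using hX)
  rw [ae_iff]
  refine measure_mono_null (fun X hX => ?_) (measure_union_null hstart (measure_iUnion_null hstep))
  simp only [Set.mem_ofPred_eq, not_and_or, not_forall, not_not] at hX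
  simpa using hX

lemma IsMarkovChain.measureReal_forall_mem_le (hP : IsMarkovChain K z P) (s : Finset S) (m : ℕ) :
    P.real {X | ∀ i ≤ m, X i ∈ s} ≤ survival K s m z := by
  have := hP.1
  rw [survival_eq_sum_pathWeight]
  calc P.real {X | ∀ i ≤ m, X i ∈ s}
      ≤ P.real (⋃ v ∈ Fintype.piFinset (fun _ : Fin (m + 1) => s),
          {X | ∀ i ≤ m, X i = extendPath v i}) := by
        refine measureReal_mono (fun X hX => Set.mem_biUnion
          (Fintype.mem_piFinset.2 fun i => hX i (by omega)) fun i hi =>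
            (extendPath_apply_of_le X hi).symm) (measure_ne_top _ _)
    _ ≤ ∑ v ∈ Fintype.piFinset (fun _ : Fin (m + 1) => s),
          P.real {X | ∀ i ≤ m, X i = extendPath v i} := measureReal_biUnion_finset_le _ _
    _ = _ := by simp only [hP.measureReal_cylinder, eq_comm]

lemma IsMarkovChain.succ_mul_measureReal_forall_mem_le (hP : IsMarkovChain K z P)
    {s : Finset S} (hK : ∀ x ∈ s, ∀ y ∈ s, 0 ≤ K x y) {h : S → ℝ} (h0 : ∀ x, 0 ≤ h x)
    (hsup : ∀ x ∈ s, 1 + ∑ y ∈ s, K x y * h y ≤ h x) (m : ℕ) :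
    (m + 1) * P.real {X | ∀ i ≤ m, X i ∈ s} ≤ h z := by
  have := hP.1
  calc (m + 1) * P.real {X | ∀ i ≤ m, X i ∈ s}
      = ∑ _k ∈ Finset.range (m + 1), P.real {X | ∀ i ≤ m, X i ∈ s} := by simp
    _ ≤ ∑ k ∈ Finset.range (m + 1), P.real {X | ∀ i ≤ k, X i ∈ s} :=
        Finset.sum_le_sum fun k hk => measureReal_mono fun X hX i hi =>
          hX i (hi.trans (Finset.mem_range_succ_iff.1 hk))
    _ ≤ ∑ k ∈ Finset.range (m + 1), survival K s k z :=
        Finset.sum_le_sum fun k _ => hP.measureReal_forall_mem_le s k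
    _ ≤ h z := sum_range_survival_le hK h0 hsup _ z

end MarkovChain

section RandomWalk

variable {ω : ℤ → ℝ}

lemma step_nonneg {x : ℤ} (hx : ω x ∈ Set.Icc 0 1) (y : ℤ) : 0 ≤ step ω x y := by
  unfold step
  split_ifs <;> linarith [hx.1, hx.2]

lemma eq_add_one_or_eq_sub_one_of_step_ne_zero {x y : ℤ} (h : step ω x y ≠ 0) :
    y = x + 1 ∨ y = x - 1 := by
  unfold step at h
  split_ifs at h with h1 h2
  exacts [Or.inl h1, Or.inr h2, absurd rfl h]

lemma sum_step_mul_le {x : ℤ} (hx : ω x ∈ Set.Icc 0 1) (s : Finset ℤ) {f : ℤ → ℝ}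
    (hf : ∀ y, 0 ≤ f y) :
    ∑ y ∈ s, step ω x y * f y ≤ ω x * f (x + 1) + (1 - ω x) * f (x - 1) := by
  calc ∑ y ∈ s, step ω x y * f y ≤ ∑ y ∈ s ∪ {x - 1, x + 1}, step ω x y * f y :=
        Finset.sum_le_sum_of_subset_of_nonneg Finset.subset_union_left
          fun y _ _ => mul_nonneg (step_nonneg hx y) (hf y)
    _ = ∑ y ∈ {x - 1, x + 1}, step ω x y * f y := by
        refine (Finset.sum_subset Finset.subset_union_right fun y _ hy => ?_).symm
        rw [mul_eq_zero, ← not_ne_iff]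
        left
        intro h
        rcases eq_add_one_or_eq_sub_one_of_step_ne_zero h with rfl | rfl <;> simp at hy
    _ = ω x * f (x + 1) + (1 - ω x) * f (x - 1) := by
        have : x - 1 ≠ x + 1 := by omega
        simp [Finset.sum_pair this, step, this, add_comm]

lemma exitTime_supersolution {a b : ℤ} (hω : ∀ x, ω x ∈ Set.Ioo 0 1) {x : ℤ}
    (hx : x ∈ Finset.Ioo a b) :
    1 + ∑ y ∈ Finset.Ioo a b, step ω x y * exitTime ω a b y ≤ exitTime ω a b x := by
  rw [Finset.mem_Ioo] at hx
  rw [← exitTime_poisson (hω x) hx.1 hx.2.le, add_assoc]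
  gcongr
  exact sum_step_mul_le (Set.Ioo_subset_Icc_self (hω x)) _ (exitTime_nonneg fun z => (hω z).1.le)

end RandomWalk

section HittingTime

variable {X : ℕ → ℤ}

lemma hitTime_le_of_eq {x : ℤ} {i : ℕ} (h : X i = x) : hitTime x X ≤ i :=
  sInf_le ⟨i, h, rfl⟩

lemma ne_of_lt_hitTime {x : ℤ} {i : ℕ} (h : (i : ℕ∞) < hitTime x X) : X i ≠ x :=
  fun hi => (hitTime_le_of_eq hi).not_gt h

lemma mem_Ioo_of_lt_hitTime (hX : ∀ j, X (j + 1) = X j + 1 ∨ X (j + 1) = X j - 1) {a b : ℤ}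
    (h0 : X 0 ∈ Set.Icc a b) {i : ℕ} (ha : (i : ℕ∞) < hitTime a X)
    (hb : (i : ℕ∞) < hitTime b X) : X i ∈ Set.Ioo a b := by
  have hna := ne_of_lt_hitTime ha
  have hnb := ne_of_lt_hitTime hb
  induction i with
  | zero => exact ⟨lt_of_le_of_ne h0.1 hna.symm, lt_of_le_of_ne h0.2 hnb⟩
  | succ i ih =>
    have hlt {x : ℤ} (h : ((i + 1 : ℕ) : ℕ∞) < hitTime x X) : (i : ℕ∞) < hitTime x X :=
      lt_of_le_of_lt (by exact_mod_cast i.le_succ) h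
    obtain ⟨hia, hib⟩ := ih (hlt ha) (hlt hb) (ne_of_lt_hitTime (hlt ha)) (ne_of_lt_hitTime (hlt hb))
    rw [Set.mem_Ioo]
    rcases hX i with h | h <;> rw [h] at hna hnb ⊢ <;> omega

end HittingTime

section Main

variable {ε δ : ℝ} {L : ℕ} {ω : ℤ → ℝ} {P : Measure (ℕ → ℤ)}

lemma mem_Ioo_of_mem_Gamma (hε : 0 < ε) (hω : ω ∈ Gamma ε L δ) (x : ℤ) : ω x ∈ Set.Ioo 0 1 :=
  ⟨hε.trans_le (hω.1 x).1, (hω.1 x).2.trans_lt (by linarith)⟩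

lemma IsRWRE.ae_hitTime_le_or_forall_mem_Ioo (hP : IsRWRE ω 0 P) {a b : ℤ} (ha : a ≤ 0)
    (hb : 0 ≤ b) (M : ℕ) :
    ∀ᵐ X ∂P, hitTime b X < hitTime a X →
      hitTime b X ≤ M ∨ ∀ i ≤ M, X i ∈ Finset.Ioo a b := by
  filter_upwards [IsMarkovChain.ae_start_and_step_ne_zero hP] with X ⟨hX0, hXstep⟩ hba
  refine or_iff_not_imp_left.2 fun hM i hi => Finset.mem_Ioo.2 ?_
  have hib : (i : ℕ∞) < hitTime b X := lt_of_le_of_lt (by exact_mod_cast hi) (not_le.1 hM)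
  exact mem_Ioo_of_lt_hitTime (fun j => eq_add_one_or_eq_sub_one_of_step_ne_zero (hXstep j))
    (hX0 ▸ ⟨ha, hb⟩) (hib.trans hba) hib

lemma succ_mul_measureReal_stay_le (hε : 0 < ε) (hω : ω ∈ Gamma ε L δ) (hP : IsRWRE ω 0 P)
    (M : ℕ) :
    (M + 1) * P.real {X | ∀ i ≤ M, X i ∈ Finset.Ioo (Tbminus ω L) (Tbplus ω L)}
      ≤ 4 * L ^ 4 * Real.exp (2 * (δ * L)) := by
  have hω01 := mem_Ioo_of_mem_Gamma hε hω
  have hbm : (0 : ℝ) ≤ -Tbminus ω L := by exact_mod_cast neg_nonneg.2 (Tbminus_mem_Icc ω L).2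
  have hbp : (0 : ℝ) ≤ Tbplus ω L := by exact_mod_cast (Tbplus_mem_Icc ω L).1
  have hbm' : -(Tbminus ω L : ℝ) ≤ L ^ 2 := by exact_mod_cast neg_le.1 (neg_sq_le_Tbminus hω)
  have hbp' : (Tbplus ω L : ℝ) ≤ L ^ 2 := by exact_mod_cast Tbplus_le_sq hω
  calc (M + 1) * P.real {X | ∀ i ≤ M, X i ∈ Finset.Ioo (Tbminus ω L) (Tbplus ω L)}
      ≤ exitTime ω (Tbminus ω L) (Tbplus ω L) 0 :=
        IsMarkovChain.succ_mul_measureReal_forall_mem_le hP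
          (fun x _ y _ => step_nonneg (Set.Ioo_subset_Icc_self (hω01 x)) y)
          (exitTime_nonneg fun x => (hω01 x).1.le) (fun x hx => exitTime_supersolution hω01 hx) M
    _ ≤ (0 - Tbminus ω L) * ((Tbplus ω L - Tbminus ω L) * (2 * Real.exp (2 * (δ * L)))) := by
        exact_mod_cast exitTime_le hω01 (fun z hz => abs_pot_le_of_mem_Gamma hω hz)
          ⟨(Tbminus_mem_Icc ω L).2, (Tbplus_mem_Icc ω L).1⟩
    _ ≤ L ^ 2 * ((L ^ 2 + L ^ 2) * (2 * Real.exp (2 * (δ * L)))) := by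
        have : (0 : ℝ) ≤ Tbplus ω L - Tbminus ω L := by linarith
        gcongr <;> linarith
    _ = 4 * L ^ 4 * Real.exp (2 * (δ * L)) := by ring

lemma measureReal_stay_le (hε : 0 < ε) (hω : ω ∈ Gamma ε L δ) (hP : IsRWRE ω 0 P) {n : ℕ}
    (hn : Real.exp (3 * δ * L) ≤ n) :
    P.real {X | ∀ i ≤ 2 * n / 3, X i ∈ Finset.Ioo (Tbminus ω L) (Tbplus ω L)}
      ≤ 6 * L ^ 4 * Real.exp (-(δ * L)) := by
  have hM : 2 * Real.exp (3 * δ * L) ≤ 3 * (((2 * n / 3 : ℕ) : ℝ) + 1) := by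
    have : ((2 * n : ℕ) : ℝ) ≤ ((3 * (2 * n / 3 + 1) : ℕ) : ℝ) := by exact_mod_cast (by omega)
    push_cast at this
    linarith
  refine le_of_mul_le_mul_left ?_ (by positivity : (0 : ℝ) < (2 * n / 3 : ℕ) + 1)
  calc _ ≤ 4 * L ^ 4 * Real.exp (2 * (δ * L)) := succ_mul_measureReal_stay_le hε hω hP _
    _ = 2 * L ^ 4 * Real.exp (-(δ * L)) * (2 * Real.exp (3 * δ * L)) := by
        rw [show 2 * (δ * L) = -(δ * L) + 3 * δ * L by ring, Real.exp_add]
        ring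
    _ ≤ 2 * L ^ 4 * Real.exp (-(δ * L)) * (3 * (((2 * n / 3 : ℕ) : ℝ) + 1)) := by gcongr
    _ = _ := by ring

lemma IsRWRE.measureReal_hitTime_lt_le (hP : IsRWRE ω 0 P) {a b : ℤ} (ha : a ≤ 0) (hb : 0 ≤ b)
    (n : ℕ) :
    P.real {X | hitTime b X < hitTime a X}
      ≤ P.real {X | 3 * hitTime b X ≤ ((2 * n : ℕ) : ℕ∞) ∧ hitTime b X < hitTime a X}
        + P.real {X | ∀ i ≤ 2 * n / 3, X i ∈ Finset.Ioo a b} := by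
  have := hP.1
  refine (ENNReal.toReal_mono (measure_ne_top _ _) (measure_mono_ae ?_)).trans
    (measureReal_union_le _ _)
  filter_upwards [hP.ae_hitTime_le_or_forall_mem_Ioo ha hb (2 * n / 3)] with X hX hlt
  refine (hX hlt).imp (fun hle => ⟨?_, hlt⟩) id
  calc 3 * hitTime b X ≤ 3 * ((2 * n / 3 : ℕ) : ℕ∞) := mul_le_mul_right hle 3
    _ ≤ ((2 * n : ℕ) : ℕ∞) := by exact_mod_cast (by omega : 3 * (2 * n / 3) ≤ 2 * n)

end Main

theorem stmt15_general (ε : ℝ) (hε : ε ∈ Set.Ioo 0 (1/2 : ℝ)) (δ : ℝ)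
    (L : ℕ) (ω : ℤ → ℝ) (hω : ω ∈ Gamma ε L δ) (P : Measure (ℕ → ℤ)) (hP : IsRWRE ω 0 P)
    (hhalf : 1 / 2 ≤
      (P {X | hitTime (Tbplus ω (L : ℝ)) X < hitTime (Tbminus ω (L : ℝ)) X}).toReal)
    (n : ℕ) (hn : Real.exp (3 * δ * L) ≤ (n : ℝ)) :
    1 / 2 - 6 * (L : ℝ) ^ 4 * Real.exp (-(δ * L))
      ≤ (P {X | 3 * hitTime (Tbplus ω (L : ℝ)) X ≤ ((2 * n : ℕ) : ℕ∞) ∧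
          hitTime (Tbplus ω (L : ℝ)) X < hitTime (Tbminus ω (L : ℝ)) X}).toReal := by
  have hcover := hP.measureReal_hitTime_lt_le (Tbminus_mem_Icc ω L).2 (Tbplus_mem_Icc ω L).1 n
  have hstay := measureReal_stay_le hε.1 hω hP hn
  change _ ≤ P.real _ at hhalf ⊢
  linarith

/-- Lower bound for the probability of reaching `b₊` before `b₋` within time `2n/3`. -/
theorem stmt15 (ε : ℝ) (hε : ε ∈ Set.Ioo 0 (1/2 : ℝ)) (δ : ℝ) (hδ : δ ∈ Set.Ioo 0 (1 : ℝ))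
    (L : ℕ) (ω : ℤ → ℝ) (hω : ω ∈ Gamma ε L δ) (P : Measure (ℕ → ℤ)) (hP : IsRWRE ω 0 P)
    (hhalf : 1 / 2 ≤
      (P {X | hitTime (Tbplus ω (L : ℝ)) X < hitTime (Tbminus ω (L : ℝ)) X}).toReal)
    (n : ℕ) (hn : Real.exp (3 * δ * L) ≤ (n : ℝ)) :
    1 / 2 - 6 * (L : ℝ) ^ 4 * Real.exp (-(δ * L))
      ≤ (P {X | 3 * hitTime (Tbplus ω (L : ℝ)) X ≤ ((2 * n : ℕ) : ℕ∞) ∧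
          hitTime (Tbplus ω (L : ℝ)) X < hitTime (Tbminus ω (L : ℝ)) X}).toReal :=
  stmt15_general ε hε δ L ω hω P hP hhalf n hn

end
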